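/- arXiv:1701.05886 — 2 statements merged into one kernel-verified Lean document; each statement's English description precedes it below -/
import Mathlib

section
/- If G is a graph without isolated vertices and H is a graph with γ(H) ≥ 2, then γ(G[H]) = γ_t(G), the total domination number of G. -/
open SimpleGraph Finset

/-- Open neighborhood of a set: vertices having a neighbor in `S`. -/
def nbhd {V : Type*} (G : SimpleGraph V) (S : Set V) : Set V := {v | ∃ u ∈ S, G.Adj u v}

/-- Closed neighborhood of a vertex. -/
def closedNbhd {V : Type*} (G : SimpleGraph V) (v : V) : Set V := insert v (G.neighborSet v)

/-- `S` dominates vertex `v`. -/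
def Dominates {V : Type*} (G : SimpleGraph V) (S : Set V) (v : V) : Prop :=
  v ∈ S ∨ ∃ u ∈ S, G.Adj u v

/-- `D` is a dominating set of `G`. -/
def IsDomSet {V : Type*} (G : SimpleGraph V) (D : Set V) : Prop := ∀ v, Dominates G D v

/-- `D` is a minimal dominating set of `G`. -/
def IsMinDomSet {V : Type*} (G : SimpleGraph V) (D : Set V) : Prop :=
  IsDomSet G D ∧ ∀ D' ⊂ D, ¬ IsDomSet G D'

/-- `D` is an irreducible dominating set of `G`. -/
def IsIrredDomSet {V : Type*} (G : SimpleGraph V) (D : Set V) : Prop :=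
  IsDomSet G D ∧ ¬ ∃ u ∈ D, IsDomSet G (D \ {u}) ∧ nbhd G D = nbhd G (D \ {u})

/-- Lexicographic product of two simple graphs. -/
def lexProd {V W : Type*} (G : SimpleGraph V) (H : SimpleGraph W) : SimpleGraph (V × W) where
  Adj p q := G.Adj p.1 q.1 ∨ (p.1 = q.1 ∧ H.Adj p.2 q.2)
  symm := by
    constructor
    rintro p q (h | ⟨e, h⟩)
    · exact Or.inl h.symm
    · exact Or.inr ⟨e.symm, h.symm⟩
  loopless := by
    constructor
    rintro p (h | ⟨_, h⟩)
    · exact G.loopless.irrefl _ h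
    · exact H.loopless.irrefl _ h

/-- Projection of `D ⊆ V(G) × V(H)` to `G`. -/
def projG {V W : Type*} (D : Set (V × W)) : Set V := {x | ∃ y, (x, y) ∈ D}

/-- Fiber of `D ⊆ V(G) × V(H)` over `x ∈ V(G)`. -/
def projH {V W : Type*} (D : Set (V × W)) (x : V) : Set W := {y | (x, y) ∈ D}

/-- The domination number. -/
noncomputable def domNum {V : Type*} [Fintype V] (G : SimpleGraph V) : ℕ :=
  sInf {n | ∃ D : Finset V, IsDomSet G ↑D ∧ D.card = n}

/-- The total domination number. -/
noncomputable def totDomNum {V : Type*} [Fintype V] (G : SimpleGraph V) : ℕ :=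
  sInf {n | ∃ D : Finset V, (∀ v, ∃ u ∈ D, G.Adj u v) ∧ D.card = n}

/-!
A total dominating set `T` of `G` gives the dominating set `T × {w}` of `G[H]`. Conversely, let `S`
dominate `G[H]` and let `P` be its projection to `G`. Every vertex of `G` is dominated by `P`, and a
vertex `x ∈ P` with no neighbour in `P` can only have its `H`-layer dominated from inside that
layer, so the fibre of `S` over `x` dominates `H` and has at least `γ(H) ≥ 2` elements. Adding one
neighbour of each such `x` to `P` therefore gives a total dominating set of size at most `|S|`.
-/

def IsTotDomSet {V : Type*} (G : SimpleGraph V) (D : Set V) : Prop := ∀ v, ∃ u ∈ D, G.Adj u v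

section Numbers

variable {V : Type*} [Fintype V] {G : SimpleGraph V}

theorem domNum_le_card {D : Finset V} (hD : IsDomSet G ↑D) : domNum G ≤ D.card :=
  Nat.sInf_le (s := {n | ∃ D : Finset V, IsDomSet G ↑D ∧ D.card = n}) ⟨D, hD, rfl⟩

theorem exists_isDomSet_card_eq_domNum (G : SimpleGraph V) :
    ∃ D : Finset V, IsDomSet G ↑D ∧ D.card = domNum G :=
  Nat.sInf_mem (s := {n | ∃ D : Finset V, IsDomSet G ↑D ∧ D.card = n})
    ⟨_, Finset.univ, fun v => Or.inl (Finset.mem_coe.2 (mem_univ v)), rfl⟩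

theorem nonempty_of_domNum_pos (h : 0 < domNum G) : Nonempty V := by
  by_contra hV
  rw [not_nonempty_iff] at hV
  have : domNum G ≤ (∅ : Finset V).card := domNum_le_card fun v => isEmptyElim v
  simp_all

theorem totDomNum_le_card {D : Finset V} (hD : IsTotDomSet G ↑D) : totDomNum G ≤ D.card :=
  Nat.sInf_le (s := {n | ∃ D : Finset V, (∀ v, ∃ u ∈ D, G.Adj u v) ∧ D.card = n}) ⟨D, hD, rfl⟩

theorem exists_isTotDomSet_card_eq_totDomNum (hG : ∀ v, ∃ u, G.Adj v u) :
    ∃ D : Finset V, IsTotDomSet G ↑D ∧ D.card = totDomNum G :=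
  Nat.sInf_mem (s := {n | ∃ D : Finset V, (∀ v, ∃ u ∈ D, G.Adj u v) ∧ D.card = n})
    ⟨_, Finset.univ, fun v => ⟨(hG v).choose, mem_univ _, (hG v).choose_spec.symm⟩, rfl⟩

end Numbers

theorem Finset.card_image_add_card_le {α β : Type*} [DecidableEq β] {f : α → β} {S : Finset α}
    {B : Finset β} (hB : B ⊆ S.image f) (hfib : ∀ b ∈ B, 2 ≤ #{a ∈ S | f a = b}) :
    #(S.image f) + #B ≤ #S := by
  have hfib_pos : ∀ b ∈ S.image f, 1 ≤ #{a ∈ S | f a = b} := fun b hb => by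
    obtain ⟨a, ha, rfl⟩ := mem_image.1 hb
    exact card_pos.2 ⟨a, mem_filter.2 ⟨ha, rfl⟩⟩
  calc #(S.image f) + #B
      = ∑ b ∈ S.image f, (1 + if b ∈ B then 1 else 0) := by
        rw [sum_add_distrib, sum_boole, filter_mem_eq_inter, inter_eq_right.2 hB]
        simp
    _ ≤ ∑ b ∈ S.image f, #{a ∈ S | f a = b} := sum_le_sum fun b hb => by
        split_ifs with h
        · exact hfib b h
        · simpa using hfib_pos b hb
    _ = #S := (card_eq_sum_card_fiberwise fun a ha => mem_image_of_mem f ha).symm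

section Domination

variable {V : Type*} {G : SimpleGraph V}

theorem IsDomSet.isTotDomSet_union_image [DecidableEq V] {P B : Finset V} (hP : IsDomSet G ↑P)
    (hB : ∀ x ∈ P, (∀ u ∈ P, ¬ G.Adj u x) → x ∈ B) {nb : V → V} (hnb : ∀ v, G.Adj v (nb v)) :
    IsTotDomSet G ↑(P ∪ B.image nb) := by
  intro v
  by_cases hv : ∃ u ∈ P, G.Adj u v
  · obtain ⟨u, hu, huv⟩ := hv
    exact ⟨u, mem_coe.2 (mem_union_left _ hu), huv⟩
  · push Not at hv
    have hvP : v ∈ P := (hP v).resolve_right (by simpa using hv)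
    exact ⟨nb v, mem_coe.2 (mem_union_right _ (mem_image_of_mem nb (hB v hvP hv))), (hnb v).symm⟩

end Domination

section LexProd

variable {V W : Type*} {G : SimpleGraph V} {H : SimpleGraph W}

theorem IsTotDomSet.isDomSet_lexProd {T : Set V} (hT : IsTotDomSet G T) (w : W) :
    IsDomSet (lexProd G H) ((·, w) '' T) := by
  rintro ⟨x, y⟩
  obtain ⟨u, hu, hux⟩ := hT x
  exact Or.inr ⟨(u, w), Set.mem_image_of_mem _ hu, Or.inl hux⟩

theorem IsDomSet.projG_lexProd [Nonempty W] {S : Set (V × W)} (hS : IsDomSet (lexProd G H) S) :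
    IsDomSet G (projG S) := by
  intro x
  obtain ⟨w⟩ := ‹Nonempty W›
  rcases hS (x, w) with hxw | ⟨⟨u, y⟩, huy, hG | ⟨rfl, -⟩⟩
  · exact Or.inl ⟨w, hxw⟩
  · exact Or.inr ⟨u, ⟨y, huy⟩, hG⟩
  · exact Or.inl ⟨y, huy⟩

theorem IsDomSet.projH_lexProd {S : Set (V × W)} (hS : IsDomSet (lexProd G H) S) {x : V}
    (hx : ∀ u ∈ projG S, ¬ G.Adj u x) : IsDomSet H (projH S x) := by
  intro y
  rcases hS (x, y) with hxy | ⟨⟨u, y'⟩, huy', hG | ⟨rfl, hH⟩⟩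
  · exact Or.inl hxy
  · exact absurd hG (hx u ⟨y', huy'⟩)
  · exact Or.inr ⟨y', huy', hH⟩

variable [Fintype V] [Fintype W]

theorem domNum_lexProd_le_totDomNum [Nonempty W] (hG : ∀ v, ∃ u, G.Adj v u) :
    domNum (lexProd G H) ≤ totDomNum G := by
  classical
  obtain ⟨T, hT, hcard⟩ := exists_isTotDomSet_card_eq_totDomNum hG
  obtain ⟨w⟩ := ‹Nonempty W›
  calc domNum (lexProd G H) ≤ #(T.image (·, w)) :=
        domNum_le_card (by simpa using hT.isDomSet_lexProd (H := H) w)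
    _ ≤ #T := card_image_le
    _ = totDomNum G := hcard

theorem totDomNum_le_domNum_lexProd (hG : ∀ v, ∃ u, G.Adj v u) (hH : 2 ≤ domNum H) :
    totDomNum G ≤ domNum (lexProd G H) := by
  classical
  have : Nonempty W := nonempty_of_domNum_pos (G := H) (by omega)
  choose nb hnb using hG
  obtain ⟨S, hS, hcard⟩ := exists_isDomSet_card_eq_domNum (lexProd G H)
  set P := S.image Prod.fst
  set B := {x ∈ P | ∀ u ∈ P, ¬ G.Adj u x}
  have hPS : (P : Set V) = projG (S : Set (V × W)) := by ext; simp [P, projG]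
  have hfib : ∀ x ∈ B, 2 ≤ #{p ∈ S | p.1 = x} := fun x hx => by
    have hxB := (mem_filter.1 hx).2
    have hdom : IsDomSet H ↑({p ∈ S | p.1 = x}.image Prod.snd) := by
      convert hS.projH_lexProd (x := x) (by simpa [← hPS] using hxB) using 1
      ext y; simp [projH]
    exact hH.trans ((domNum_le_card hdom).trans card_image_le)
  have hT := IsDomSet.isTotDomSet_union_image (hPS ▸ hS.projG_lexProd)
    (fun x hx hxP => mem_filter.2 ⟨hx, hxP⟩) hnb
  calc totDomNum G ≤ #(P ∪ B.image nb) := totDomNum_le_card hT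
    _ ≤ #P + #B := (card_union_le _ _).trans (Nat.add_le_add_left card_image_le _)
    _ ≤ #S := card_image_add_card_le (filter_subset _ _) hfib
    _ = domNum (lexProd G H) := hcard

end LexProd

theorem stmt10 {V W : Type*} [Fintype V] [Fintype W]
    (G : SimpleGraph V) (H : SimpleGraph W)
    (hiso : ∀ v : V, ∃ u, G.Adj v u)
    (hH : 2 ≤ domNum H) :
    domNum (lexProd G H) = totDomNum G := by
  have : Nonempty W := nonempty_of_domNum_pos (G := H) (by omega)
  exact le_antisymm (domNum_lexProd_le_totDomNum hiso) (totDomNum_le_domNum_lexProd hiso hH)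
end

section
/- Let G and H be graphs each with at least two vertices, with G connected. If the lexicographic product G[H] is well-dominated, then H is well-dominated. -/
open SimpleGraph Finset

/-- A graph is well-dominated if all its minimal dominating sets have the same size. -/
def WellDominated (V : Type*) [Fintype V] (G : SimpleGraph V) : Prop :=
  ∀ D₁ D₂ : Finset V, IsMinDomSet G ↑D₁ → IsMinDomSet G ↑D₂ → D₁.card = D₂.card

/-!
Fix a vertex `x` of `G`. In `G[H]`, the set `{x} × D` dominates every vertex over the closed
neighbourhood of `x` as soon as `D` dominates `H`, but none of the vertices over its complement;
conversely, vertices over that complement dominate nothing over `x`. So if `F` is a minimal set of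
vertices over the complement dominating all of them, then `{x} × D ∪ F` is a minimal dominating set
of `G[H]` whenever `D` is one of `H`. Its size is `|D| + |F|`, so well-dominatedness of `G[H]`
forces all minimal dominating sets of `H` to have the same size.
-/

section Domination

variable {V : Type*} {G : SimpleGraph V}

lemma mem_closedNbhd {x a : V} : a ∈ closedNbhd G x ↔ a = x ∨ G.Adj x a := Iff.rfl

lemma dominates_union {S T : Set V} {v : V} :
    Dominates G (S ∪ T) v ↔ Dominates G S v ∨ Dominates G T v := by
  simp only [Dominates, Set.mem_union, or_and_right, exists_or, or_or_or_comm]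

lemma IsDomSet.mono {S T : Set V} (hST : S ⊆ T) (hS : IsDomSet G S) : IsDomSet G T := fun v ↦
  (hS v).imp (fun hv ↦ hST hv) fun ⟨u, hu, huv⟩ ↦ ⟨u, hST hu, huv⟩

lemma isMinDomSet_iff {D : Set V} :
    IsMinDomSet G D ↔ IsDomSet G D ∧ ∀ u ∈ D, ¬ IsDomSet G (D \ {u}) := by
  refine and_congr_right fun _ ↦ ⟨fun h u hu ↦ h _ (Set.sdiff_singleton_ssubset.mpr hu), ?_⟩
  intro h D' hD' hdom
  obtain ⟨u, huD, huD'⟩ := Set.exists_of_ssubset hD'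
  exact h u huD (hdom.mono fun v hv ↦ ⟨hD'.subset hv, fun hvu ↦ huD' (hvu ▸ hv)⟩)

end Domination

section LexProd

variable {V W : Type*} {G : SimpleGraph V} {H : SimpleGraph W}

lemma lexProd_dominates_singleton_prod {x a : V} {D : Set W} {y : W} :
    Dominates (lexProd G H) ({x} ×ˢ D) (a, y) ↔
      (a = x ∧ Dominates H D y) ∨ (G.Adj x a ∧ D.Nonempty) := by
  simp only [Dominates, lexProd, Set.mem_prod, Set.mem_singleton_iff, Prod.exists]
  constructor
  · rintro (⟨rfl, hy⟩ | ⟨_, d, ⟨rfl, hd⟩, hadj | ⟨rfl, hadj⟩⟩)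
    · exact Or.inl ⟨rfl, Or.inl hy⟩
    · exact Or.inr ⟨hadj, d, hd⟩
    · exact Or.inl ⟨rfl, Or.inr ⟨d, hd, hadj⟩⟩
  · rintro (⟨rfl, hy | ⟨d, hd, hadj⟩⟩ | ⟨hadj, d, hd⟩)
    · exact Or.inl ⟨rfl, hy⟩
    · exact Or.inr ⟨a, d, ⟨rfl, hd⟩, Or.inr ⟨rfl, hadj⟩⟩
    · exact Or.inr ⟨x, d, ⟨rfl, hd⟩, Or.inl hadj⟩

lemma not_lexProd_dominates_of_subset_compl_closedNbhd {x : V} {F : Set (V × W)}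
    (hF : F ⊆ (closedNbhd G x)ᶜ ×ˢ Set.univ) (y : W) : ¬ Dominates (lexProd G H) F (x, y) := by
  rintro (hxy | ⟨u, hu, hadj | ⟨hux, -⟩⟩)
  · exact (hF hxy).1 (Or.inl rfl)
  · exact (hF hu).1 (Or.inr hadj.symm)
  · exact (hF hu).1 (Or.inl hux)

variable (G H) in
def DominatesFar (x : V) (F : Set (V × W)) : Prop :=
  F ⊆ (closedNbhd G x)ᶜ ×ˢ Set.univ ∧
    ∀ v ∈ (closedNbhd G x)ᶜ ×ˢ (Set.univ : Set W), Dominates (lexProd G H) F v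

lemma isDomSet_lexProd_singleton_prod_union {x : V} {D : Set W} {F : Set (V × W)}
    (hD : IsDomSet H D) (hF : DominatesFar G H x F) :
    IsDomSet (lexProd G H) ({x} ×ˢ D ∪ F) := by
  rintro ⟨a, y⟩
  rw [dominates_union, lexProd_dominates_singleton_prod]
  by_cases ha : a ∈ closedNbhd G x
  · rcases mem_closedNbhd.mp ha with rfl | hadj
    · exact Or.inl (Or.inl ⟨rfl, hD y⟩)
    · have hDne : D.Nonempty := by
        rcases hD y with hy | ⟨d, hd, -⟩
        exacts [⟨y, hy⟩, ⟨d, hd⟩]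
      exact Or.inl (Or.inr ⟨hadj, hDne⟩)
  · exact Or.inr (hF.2 (a, y) ⟨ha, trivial⟩)

lemma isMinDomSet_lexProd_singleton_prod_union {x : V} {D : Set W} {F : Set (V × W)}
    (hD : IsMinDomSet H D) (hF : Minimal (DominatesFar G H x) F) :
    IsMinDomSet (lexProd G H) ({x} ×ˢ D ∪ F) := by
  have hFx := hF.prop.1
  rw [isMinDomSet_iff] at hD ⊢
  refine ⟨isDomSet_lexProd_singleton_prod_union hD.1 hF.prop, ?_⟩
  rintro u (⟨hux, hud⟩ | huF) hdom
  · -- Removing `(x, d)` leaves some `(x, y)` undominated, since `F` cannot dominate `(x, y)`.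
    obtain ⟨y, hy⟩ := not_forall.mp (hD.2 u.2 hud)
    have hsub : ({x} ×ˢ D ∪ F) \ {u} ⊆ {x} ×ˢ (D \ {u.2}) ∪ F := by
      rintro ⟨a, b⟩ ⟨hab | habF, hne⟩
      · refine Or.inl ⟨hab.1, hab.2, fun hb ↦ hne (Prod.ext ?_ hb)⟩
        rw [hux, hab.1]
      · exact Or.inr habF
    have := (hdom.mono hsub) (x, y)
    rw [dominates_union, lexProd_dominates_singleton_prod] at this
    rcases this with (⟨-, hy'⟩ | ⟨hxx, -⟩) | hF'
    · exact hy hy'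
    · exact G.loopless.irrefl x hxx
    · exact not_lexProd_dominates_of_subset_compl_closedNbhd hFx y hF'
  · -- Removing `u ∈ F` leaves some far vertex undominated, since `{x} × D` cannot reach it.
    have hlt : F \ {u} < F := Set.sdiff_singleton_ssubset.mpr huF
    obtain ⟨⟨a, y⟩, ⟨ha, -⟩, hay⟩ : ∃ v ∈ (closedNbhd G x)ᶜ ×ˢ (Set.univ : Set W),
        ¬ Dominates (lexProd G H) (F \ {u}) v := by
      by_contra! h
      exact hF.not_prop_of_lt hlt ⟨Set.sdiff_subset.trans hFx, h⟩
    have hsub : ({x} ×ˢ D ∪ F) \ {u} ⊆ {x} ×ˢ D ∪ F \ {u} := by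
      rintro v ⟨hv | hv, hne⟩
      exacts [Or.inl hv, Or.inr ⟨hv, hne⟩]
    have := (hdom.mono hsub) (a, y)
    rw [dominates_union, lexProd_dominates_singleton_prod] at this
    rcases this with (⟨rfl, -⟩ | ⟨hadj, -⟩) | hF'
    · exact ha (Or.inl rfl)
    · exact ha (Or.inr hadj)
    · exact hay hF'

end LexProd

theorem stmt17_general {V W : Type*} [Fintype V] [Fintype W]
    (G : SimpleGraph V) (H : SimpleGraph W)
    (hGconn : G.Connected)
    (hwd : WellDominated (V × W) (lexProd G H)) :
    WellDominated W H := by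
  classical
  intro D₁ D₂ h₁ h₂
  obtain ⟨x⟩ := hGconn.nonempty
  obtain ⟨F, hF⟩ := exists_minimal_of_wellFoundedLT (DominatesFar G H x)
    ⟨_, subset_rfl, fun _ hv ↦ Or.inl hv⟩
  have hdisj (D : Finset W) : Disjoint ({x} ×ˢ D) F.toFinset := by
    refine Finset.disjoint_left.mpr fun p hp hpF ↦ (hF.prop.1 (Set.mem_toFinset.mp hpF)).1 ?_
    exact Or.inl (Finset.mem_singleton.mp (Finset.mem_product.mp hp).1)
  have hmin (D : Finset W) (hD : IsMinDomSet H ↑D) :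
      IsMinDomSet (lexProd G H) ↑({x} ×ˢ D ∪ F.toFinset) := by
    rw [Finset.coe_union, Finset.coe_product, Finset.coe_singleton, Set.coe_toFinset]
    exact isMinDomSet_lexProd_singleton_prod_union hD hF
  have hcard := hwd _ _ (hmin D₁ h₁) (hmin D₂ h₂)
  rwa [card_union_of_disjoint (hdisj D₁), card_union_of_disjoint (hdisj D₂), card_product,
    card_product, card_singleton, one_mul, one_mul, Nat.add_right_cancel_iff] at hcard

theorem stmt17 {V W : Type*} [Fintype V] [Fintype W]
    (G : SimpleGraph V) (H : SimpleGraph W)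
    (hVcard : 2 ≤ Fintype.card V) (hWcard : 2 ≤ Fintype.card W)
    (hGconn : G.Connected)
    (hwd : WellDominated (V × W) (lexProd G H)) :
    WellDominated W H :=
  stmt17_general G H hGconn hwd
end
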